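/- ResNet input–output Jacobian bound. Consider the ResNet with differentiable activation satisfying |φ'(z)| ≤ C_φ for all z, and with parameters satisfying the spectral bounds. Then the input–output Jacobian ∂f/∂x = (σ_w/√n)·w^{(L+1)ᵀ} · ( Π_{ℓ=1}^{L} ( I_n + α·(σ_v/√n)·V^{(ℓ)}·diag{φ'(g^{(ℓ)})}·(σ_w/√n)·W^{(ℓ)} ) ) · (1/√d)·U satisfies ‖∂f/∂x‖ ≤ 2σ_w·(1 + 2√(n/d))·(1 + 9α·C_φ·σ_v·σ_w)^L. -/

import Mathlib

open MeasureTheory ProbabilityTheory Filter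

noncomputable section

/-- Index type for all ResNet parameters: w^{(L+1)}, {W^{(ℓ)}}, {V^{(ℓ)}}, U. -/
abbrev ParamIdx (n L d : ℕ) : Type :=
  (Fin n) ⊕ (Fin L × Fin n × Fin n) ⊕ (Fin L × Fin n × Fin n) ⊕ (Fin n × Fin d)

/-- The full (vectorized) parameter vector. -/
abbrev Params (n L d : ℕ) : Type := ParamIdx n L d → ℝ

/-- Last-layer weight vector w^{(L+1)}. -/
def wOut {n L d : ℕ} (θ : Params n L d) : Fin n → ℝ := fun i => θ (Sum.inl i)

/-- W^{(ℓ)} for ℓ = 1,…,L (zero outside this range). -/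
def Wmat {n L d : ℕ} (θ : Params n L d) (ℓ : ℕ) : Matrix (Fin n) (Fin n) ℝ :=
  if h : 1 ≤ ℓ ∧ ℓ ≤ L then
    Matrix.of fun i j => θ (Sum.inr (Sum.inl (⟨ℓ - 1, by omega⟩, i, j)))
  else 0

/-- V^{(ℓ)} for ℓ = 1,…,L (zero outside this range). -/
def Vmat {n L d : ℕ} (θ : Params n L d) (ℓ : ℕ) : Matrix (Fin n) (Fin n) ℝ :=
  if h : 1 ≤ ℓ ∧ ℓ ≤ L then
    Matrix.of fun i j => θ (Sum.inr (Sum.inr (Sum.inl (⟨ℓ - 1, by omega⟩, i, j))))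
  else 0

/-- Input lifting matrix U. -/
def Umat {n L d : ℕ} (θ : Params n L d) : Matrix (Fin n) (Fin d) ℝ :=
  Matrix.of fun i j => θ (Sum.inr (Sum.inr (Sum.inr (i, j))))

/-- Euclidean (ℓ²) norm of a finite vector. -/
def l2norm {k : ℕ} (v : Fin k → ℝ) : ℝ := Real.sqrt (∑ i, (v i) ^ 2)

/-- Euclidean norm of a full parameter vector. -/
def paramNorm {n L d : ℕ} (θ : Params n L d) : ℝ := Real.sqrt (∑ i, (θ i) ^ 2)

/-- Spectral (operator) norm of a matrix. -/
def specNorm {m k : ℕ} (A : Matrix (Fin m) (Fin k) ℝ) : ℝ :=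
  sSup ((fun v => l2norm (A.mulVec v)) '' {v | l2norm v ≤ 1})

/-- Smallest singular value of a matrix. -/
def singMin {m k : ℕ} (A : Matrix (Fin m) (Fin k) ℝ) : ℝ :=
  sInf ((fun v => l2norm (A.mulVec v)) '' {v | l2norm v = 1})

/-- Frobenius norm of a matrix. -/
def frobNorm {m k : ℕ} (A : Matrix (Fin m) (Fin k) ℝ) : ℝ :=
  Real.sqrt (∑ i, ∑ j, (A i j) ^ 2)

/-- Layer activations x^{(ℓ)} of the ResNet. -/
def xvec {n L d : ℕ} (φ : ℝ → ℝ) (α σv σw : ℝ) (θ : Params n L d) (x : Fin d → ℝ) :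
    ℕ → Fin n → ℝ
  | 0 => (Real.sqrt d)⁻¹ • (Umat θ).mulVec x
  | ℓ + 1 =>
      xvec φ α σv σw θ x ℓ +
        (α * σv / Real.sqrt n) • (Vmat θ (ℓ + 1)).mulVec
          (fun i => φ ((σw / Real.sqrt n) *
              (Wmat θ (ℓ + 1)).mulVec (xvec φ α σv σw θ x ℓ) i))

/-- Pre-activations g^{(ℓ)} of the ResNet (meaningful for ℓ = 1,…,L). -/
def gvec {n L d : ℕ} (φ : ℝ → ℝ) (α σv σw : ℝ) (θ : Params n L d) (x : Fin d → ℝ)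
    (ℓ : ℕ) : Fin n → ℝ :=
  (σw / Real.sqrt n) • (Wmat θ ℓ).mulVec (xvec φ α σv σw θ x (ℓ - 1))

/-- The ResNet output f(x;θ). -/
def fnet {n L d : ℕ} (φ : ℝ → ℝ) (α σv σw : ℝ) (θ : Params n L d) (x : Fin d → ℝ) : ℝ :=
  (σw / Real.sqrt n) * ∑ i, wOut θ i * xvec φ α σv σw θ x L i

/-- The i.i.d. standard Gaussian initialization measure on the parameters. -/
def initMeasure (n L d : ℕ) : Measure (Params n L d) :=
  Measure.pi fun _ => gaussianReal 0 1

/-- Standard Gaussian on ℝ². -/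
def stdGauss2 : Measure (ℝ × ℝ) := (gaussianReal 0 1).prod (gaussianReal 0 1)

/-- The centered bivariate Gaussian N(0,Σ) for Σ = [[K11,K12],[K12,K22]] positive
semidefinite, realized via the Cholesky factorization. -/
def biGauss (K11 K12 K22 : ℝ) : Measure (ℝ × ℝ) :=
  stdGauss2.map (fun z => (Real.sqrt K11 * z.1,
    (K12 / Real.sqrt K11) * z.1 + Real.sqrt (K22 - K12 ^ 2 / K11) * z.2))

/-- T(Σ) = E_{(u,v)∼N(0,Σ)}[φ(u)φ(v)]. -/
def TT (φ : ℝ → ℝ) (K11 K12 K22 : ℝ) : ℝ :=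
  ∫ uv, φ uv.1 * φ uv.2 ∂(biGauss K11 K12 K22)

/-- Ṫ(Σ) = E_{(u,v)∼N(0,Σ)}[φ'(u)φ'(v)]. -/
def TTdot (φ : ℝ → ℝ) (K11 K12 K22 : ℝ) : ℝ :=
  ∫ uv, deriv φ uv.1 * deriv φ uv.2 ∂(biGauss K11 K12 K22)

/-- The limiting GP kernels: `Kker … ℓ x y` is K^{(ℓ+1)}(x,y); in particular
`Kker … 0 x y = K^{(1)}(x,y) = (σ_w²/d)·xᵀy` and `Kker … L x y = K^{(L+1)}(x,y)`. -/
def Kker (φ : ℝ → ℝ) (α σv σw : ℝ) {d : ℕ} : ℕ → (Fin d → ℝ) → (Fin d → ℝ) → ℝ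
  | 0 => fun x y => σw ^ 2 / d * ∑ i, x i * y i
  | ℓ + 1 => fun x y =>
      Kker φ α σv σw ℓ x y + α ^ 2 * σv ^ 2 * σw ^ 2 *
        TT φ (Kker φ α σv σw ℓ x x) (Kker φ α σv σw ℓ x y) (Kker φ α σv σw ℓ y y)


/-- The spectral bounds on a parameter vector: ‖w^{(L+1)}‖₂ ≤ 2√n, ‖U‖ ≤ √d + 2√n, and
‖W^{(ℓ)}‖, ‖V^{(ℓ)}‖ ≤ 3√n for ℓ = 1,…,L. -/
def SpectralBounds {n L d : ℕ} (θ : Params n L d) : Prop :=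
  l2norm (wOut θ) ≤ 2 * Real.sqrt n ∧
  specNorm (Umat θ) ≤ Real.sqrt d + 2 * Real.sqrt n ∧
  ∀ ℓ : ℕ, 1 ≤ ℓ → ℓ ≤ L →
    specNorm (Wmat θ ℓ) ≤ 3 * Real.sqrt n ∧ specNorm (Vmat θ ℓ) ≤ 3 * Real.sqrt n

/-- The ℓ-th layer Jacobian ∂x^{(ℓ)}/∂x^{(ℓ-1)} = I + α(σ_v/√n)V^{(ℓ)}·diag{φ'(g^{(ℓ)})}·(σ_w/√n)W^{(ℓ)}. -/
def layerJac {n L d : ℕ} (φ : ℝ → ℝ) (α σv σw : ℝ) (θ : Params n L d) (x : Fin d → ℝ)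
    (ℓ : ℕ) : Matrix (Fin n) (Fin n) ℝ :=
  1 + (α * σv * σw / (n : ℝ)) •
    (Vmat θ ℓ * Matrix.diagonal (fun i => deriv φ (gvec φ α σv σw θ x ℓ i)) * Wmat θ ℓ)

/-- The product ∂x^{(m)}/∂x^{(0)} = Π_{ℓ=1}^{m} layerJac ℓ (leftmost factor ℓ = m). -/
def chainProd {n L d : ℕ} (φ : ℝ → ℝ) (α σv σw : ℝ) (θ : Params n L d) (x : Fin d → ℝ) :
    ℕ → Matrix (Fin n) (Fin n) ℝ
  | 0 => 1
  | m + 1 => layerJac φ α σv σw θ x (m + 1) * chainProd φ α σv σw θ x m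

/-- The input–output Jacobian ∂f/∂x of the ResNet (as a vector in ℝ^d):
(σ_w/√n)·w^{(L+1)ᵀ}·(Π_{ℓ=1}^{L} layerJac ℓ)·(1/√d)·U. -/
def ioJacResNet {n L d : ℕ} (φ : ℝ → ℝ) (α σv σw : ℝ) (θ : Params n L d) (x : Fin d → ℝ) :
    Fin d → ℝ :=
  (σw / Real.sqrt n * (Real.sqrt d)⁻¹) •
    (Umat θ).transpose.mulVec ((chainProd φ α σv σw θ x L).transpose.mulVec (wOut θ))

/-!
Read `specNorm` as the ℓ²-operator norm of matrices, which is submultiplicative, invariant under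
transposition, and equal to the sup norm of the diagonal on diagonal matrices. Each layer Jacobian
`I + (α σ_v σ_w / n) V D W` then has norm at most `1 + (α σ_v σ_w / n) (3√n) C_φ (3√n) =
1 + 9 α C_φ σ_v σ_w`, so their product has norm at most `(1 + 9 α C_φ σ_v σ_w)^L`, and the
Jacobian `(σ_w / √(n d)) Uᵀ Pᵀ w` has norm at most
`(σ_w / √(n d)) (√d + 2√n) (1 + 9 α C_φ σ_v σ_w)^L (2√n)`.
-/

open Matrix
open scoped Matrix.Norms.L2Operator

lemma l2norm_eq_norm_toLp {k : ℕ} (v : Fin k → ℝ) : l2norm v = ‖WithLp.toLp 2 v‖ := by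
  simp [l2norm, EuclideanSpace.norm_eq]

lemma l2norm_nonneg {k : ℕ} (v : Fin k → ℝ) : 0 ≤ l2norm v := Real.sqrt_nonneg _

lemma l2norm_smul {k : ℕ} (c : ℝ) (v : Fin k → ℝ) : l2norm (c • v) = |c| * l2norm v := by
  rw [l2norm_eq_norm_toLp, l2norm_eq_norm_toLp, WithLp.toLp_smul, norm_smul, Real.norm_eq_abs]

lemma specNorm_eq_l2_opNorm {m k : ℕ} (A : Matrix (Fin m) (Fin k) ℝ) : specNorm A = ‖A‖ := by
  rw [l2_opNorm_def, ← ContinuousLinearMap.sSup_unitClosedBall_eq_norm, specNorm]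
  congr 1
  ext r
  constructor
  · rintro ⟨v, hv, rfl⟩
    refine ⟨WithLp.toLp 2 v, ?_, ?_⟩
    · simpa [l2norm_eq_norm_toLp] using hv
    · simp [l2norm_eq_norm_toLp]
  · rintro ⟨v, hv, rfl⟩
    refine ⟨v.ofLp, ?_, ?_⟩
    · simpa [l2norm_eq_norm_toLp] using hv
    · simp only [l2norm_eq_norm_toLp]; rfl

lemma l2norm_mulVec_le {m k : ℕ} (A : Matrix (Fin m) (Fin k) ℝ) (v : Fin k → ℝ) :
    l2norm (A *ᵥ v) ≤ ‖A‖ * l2norm v := by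
  rw [l2norm_eq_norm_toLp, l2norm_eq_norm_toLp]
  exact A.l2_opNorm_mulVec (WithLp.toLp 2 v)

lemma l2_opNorm_one_le (n : ℕ) : ‖(1 : Matrix (Fin n) (Fin n) ℝ)‖ ≤ 1 := by
  rw [← diagonal_one, l2_opNorm_diagonal]
  exact (pi_norm_le_iff_of_nonneg zero_le_one).2 fun _ => by simp

lemma l2_opNorm_transpose {m k : ℕ} (A : Matrix (Fin m) (Fin k) ℝ) : ‖Aᵀ‖ = ‖A‖ := by
  rw [← conjTranspose_eq_transpose_of_trivial, l2_opNorm_conjTranspose]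

lemma ioJacResNet_prefactor_le {σw : ℝ} (hσw : 0 ≤ σw) (n d : ℕ) :
    σw / Real.sqrt n * (Real.sqrt d)⁻¹ * ((Real.sqrt d + 2 * Real.sqrt n) * (2 * Real.sqrt n)) ≤
      2 * σw * (1 + 2 * Real.sqrt ((n : ℝ) / d)) := by
  rw [Real.sqrt_div' _ d.cast_nonneg]
  calc σw / Real.sqrt n * (Real.sqrt d)⁻¹ * ((Real.sqrt d + 2 * Real.sqrt n) * (2 * Real.sqrt n))
      = 2 * σw * (Real.sqrt n / Real.sqrt n) *
          (Real.sqrt d / Real.sqrt d + 2 * (Real.sqrt n / Real.sqrt d)) := by ring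
    _ ≤ 2 * σw * 1 * (1 + 2 * (Real.sqrt n / Real.sqrt d)) := by
        gcongr <;> exact div_self_le_one _
    _ = 2 * σw * (1 + 2 * (Real.sqrt n / Real.sqrt d)) := by ring

section ResNet

variable {n L d : ℕ} {φ : ℝ → ℝ} {α σv σw Cφ : ℝ} {θ : Params n L d} {x : Fin d → ℝ}

lemma l2_opNorm_layerJac_le (hα : 0 ≤ α) (hσv : 0 ≤ σv) (hσw : 0 ≤ σw) (hCφ : 0 ≤ Cφ)
    (hφ' : ∀ z, |deriv φ z| ≤ Cφ) {ℓ : ℕ} (hW : ‖Wmat θ ℓ‖ ≤ 3 * Real.sqrt n)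
    (hV : ‖Vmat θ ℓ‖ ≤ 3 * Real.sqrt n) :
    ‖layerJac φ α σv σw θ x ℓ‖ ≤ 1 + 9 * α * Cφ * σv * σw := by
  set D := diagonal fun i => deriv φ (gvec φ α σv σw θ x ℓ i)
  have hD : ‖D‖ ≤ Cφ := by
    rw [l2_opNorm_diagonal]
    exact (pi_norm_le_iff_of_nonneg hCφ).2 fun i => hφ' _
  have hVDW := calc
    ‖Vmat θ ℓ * D * Wmat θ ℓ‖ ≤ 3 * Real.sqrt n * Cφ * (3 * Real.sqrt n) :=
      (l2_opNorm_mul _ _).trans <| mul_le_mul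
        ((l2_opNorm_mul _ _).trans (mul_le_mul hV hD (norm_nonneg _) (by positivity)))
        hW (norm_nonneg _) (by positivity)
    _ = 9 * Cφ * n := by linear_combination 9 * Cφ * Real.mul_self_sqrt n.cast_nonneg
  calc ‖layerJac φ α σv σw θ x ℓ‖
      ≤ ‖(1 : Matrix (Fin n) (Fin n) ℝ)‖ + α * σv * σw / n * ‖Vmat θ ℓ * D * Wmat θ ℓ‖ := by
        rw [layerJac, ← norm_smul_of_nonneg (by positivity)]
        exact norm_add_le _ _
    _ ≤ 1 + α * σv * σw / n * (9 * Cφ * n) := by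
        gcongr
        exact l2_opNorm_one_le n
    _ = 1 + 9 * α * Cφ * σv * σw * (n / n) := by ring
    _ ≤ 1 + 9 * α * Cφ * σv * σw := by
        gcongr 1 + ?_
        exact mul_le_of_le_one_right (by positivity) (div_self_le_one _)

lemma l2_opNorm_chainProd_le {K : ℝ} (hK : 0 ≤ K)
    (hlayer : ∀ ℓ, 1 ≤ ℓ → ℓ ≤ L → ‖layerJac φ α σv σw θ x ℓ‖ ≤ K) :
    ∀ m ≤ L, ‖chainProd φ α σv σw θ x m‖ ≤ K ^ m
  | 0, _ => by simpa [chainProd] using l2_opNorm_one_le n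
  | m + 1, hm => by
    rw [chainProd, pow_succ']
    exact (l2_opNorm_mul _ _).trans <| mul_le_mul (hlayer _ m.succ_pos hm)
      (l2_opNorm_chainProd_le hK hlayer m (Nat.le_of_succ_le hm)) (norm_nonneg _) hK

lemma l2norm_ioJacResNet_le :
    l2norm (ioJacResNet φ α σv σw θ x) ≤ |σw / Real.sqrt n * (Real.sqrt d)⁻¹| *
      (‖Umat θ‖ * (‖chainProd φ α σv σw θ x L‖ * l2norm (wOut θ))) := by
  rw [ioJacResNet, l2norm_smul]
  refine mul_le_mul_of_nonneg_left ?_ (abs_nonneg _)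
  refine (l2norm_mulVec_le _ _).trans ?_
  rw [l2_opNorm_transpose]
  refine mul_le_mul_of_nonneg_left ?_ (norm_nonneg _)
  exact (l2norm_mulVec_le _ _).trans_eq (by rw [l2_opNorm_transpose])

end ResNet

theorem resnet_io_jacobian_bound_general
    (n L d : ℕ)
    (α σv σw Cφ : ℝ) (hα : 0 < α) (hσv : 0 < σv) (hσw : 0 < σw) (hCφ : 0 < Cφ)
    (φ : ℝ → ℝ) (hφ' : ∀ z : ℝ, |deriv φ z| ≤ Cφ)
    (x : Fin d → ℝ)
    (θ : Params n L d) (hθ : SpectralBounds θ) :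
    l2norm (ioJacResNet φ α σv σw θ x) ≤
      2 * σw * (1 + 2 * Real.sqrt ((n : ℝ) / d)) * (1 + 9 * α * Cφ * σv * σw) ^ L := by
  obtain ⟨hw, hU, hWV⟩ := hθ
  simp only [specNorm_eq_l2_opNorm] at hU hWV
  set K := 1 + 9 * α * Cφ * σv * σw
  have hP : ‖chainProd φ α σv σw θ x L‖ ≤ K ^ L :=
    l2_opNorm_chainProd_le (by positivity) (fun ℓ h1 h2 => l2_opNorm_layerJac_le hα.le hσv.le
      hσw.le hCφ.le hφ' (hWV ℓ h1 h2).1 (hWV ℓ h1 h2).2) L le_rfl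
  have := l2norm_nonneg (wOut θ)
  calc l2norm (ioJacResNet φ α σv σw θ x)
      ≤ |σw / Real.sqrt n * (Real.sqrt d)⁻¹| *
          (‖Umat θ‖ * (‖chainProd φ α σv σw θ x L‖ * l2norm (wOut θ))) :=
        l2norm_ioJacResNet_le
    _ ≤ σw / Real.sqrt n * (Real.sqrt d)⁻¹ *
          ((Real.sqrt d + 2 * Real.sqrt n) * (K ^ L * (2 * Real.sqrt n))) := by
        rw [abs_of_nonneg (by positivity)]
        gcongr
    _ = σw / Real.sqrt n * (Real.sqrt d)⁻¹ *
          ((Real.sqrt d + 2 * Real.sqrt n) * (2 * Real.sqrt n)) * K ^ L := by ring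
    _ ≤ 2 * σw * (1 + 2 * Real.sqrt ((n : ℝ) / d)) * K ^ L :=
        mul_le_mul_of_nonneg_right (ioJacResNet_prefactor_le hσw.le n d) (by positivity)

/-- **ResNet input–output Jacobian bound.** Under the spectral bounds on the parameters and
|φ'| ≤ C_φ, the input–output Jacobian satisfies
‖∂f/∂x‖ ≤ 2σ_w(1 + 2√(n/d))(1 + 9αC_φσ_vσ_w)^L. -/
theorem resnet_io_jacobian_bound
    (n L d : ℕ) (hn : 1 ≤ n) (hL : 1 ≤ L) (hd : 1 ≤ d)
    (α σv σw Cφ : ℝ) (hα : 0 < α) (hσv : 0 < σv) (hσw : 0 < σw) (hCφ : 0 < Cφ)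
    (φ : ℝ → ℝ) (hφd : Differentiable ℝ φ) (hφ' : ∀ z : ℝ, |deriv φ z| ≤ Cφ)
    (B : ℝ) (x : Fin d → ℝ) (hx : l2norm x ≤ B)
    (θ : Params n L d) (hθ : SpectralBounds θ) :
    l2norm (ioJacResNet φ α σv σw θ x) ≤
      2 * σw * (1 + 2 * Real.sqrt ((n : ℝ) / d)) * (1 + 9 * α * Cφ * σv * σw) ^ L :=
  resnet_io_jacobian_bound_general n L d α σv σw Cφ hα hσv hσw hCφ φ hφ' x θ hθ
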